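/- arXiv:2307.00705 — 4 statements merged into one kernel-verified Lean document; each statement's English description precedes it below -/
import Mathlib

section
/- Let n, m be positive integers and let A ∈ ℝ^{n×n}, B ∈ ℝ^{n×m}, C ∈ ℝ^{m×n}, D, G ∈ ℝ^{m×m}, F ∈ ℝ^{m×n} be real matrices with G invertible; set Â = A − BF and Ĉ = G(C − DF). Let P ∈ ℝ^{n×n} be symmetric positive definite and set Q = P^{-1}, R = F P^{-1}, S = G^{-1}. Then the symmetric block matrix W = [[P Â + Âᵀ P, P B − Ĉᵀ], [Bᵀ P − Ĉ, −(GD + (GD)ᵀ)]] is negative definite if and only if the transformed symmetric block matrix W' = [[A Q + Q Aᵀ − B R − Rᵀ Bᵀ, B Sᵀ − Q Cᵀ + Rᵀ Dᵀ], [S Bᵀ − C Q + D R, −(D Sᵀ + S Dᵀ)]] is negative definite. -/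
open Matrix

/-- A real symmetric matrix is negative definite if `xᵀ M x < 0` for all `x ≠ 0`. -/
def Matrix.NegDefR {n : Type*} [Fintype n] (M : Matrix n n ℝ) : Prop :=
  M.IsHermitian ∧ ∀ x : n → ℝ, x ≠ 0 → x ⬝ᵥ (M *ᵥ x) < 0

lemma negdef_conj {k : Type*} [Fintype k] [DecidableEq k]
    (M T T' : Matrix k k ℝ) (h1 : T * T' = 1) (hM : M.NegDefR) :
    (T * M * Tᵀ).NegDefR := by
  obtain ⟨hH, hlt⟩ := hM
  have e1 : ∀ (X : Matrix k k ℝ), Xᴴ = Xᵀ := by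
    intro X; ext i j; simp [conjTranspose_apply]
  constructor
  · show (T * M * Tᵀ)ᴴ = T * M * Tᵀ
    rw [e1, transpose_mul, transpose_mul, transpose_transpose]
    have hMs : Mᵀ = M := by rw [← e1]; exact hH
    rw [hMs, Matrix.mul_assoc]
  · intro x hx
    have hy : Tᵀ *ᵥ x ≠ 0 := by
      intro h
      apply hx
      have h3 := congrArg (fun v => T'ᵀ *ᵥ v) h
      simpa [mulVec_mulVec, ← transpose_mul, h1] using h3
    have hlt2 := hlt _ hy
    calc x ⬝ᵥ ((T * M * Tᵀ) *ᵥ x)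
        = (x ᵥ* T) ⬝ᵥ ((M * Tᵀ) *ᵥ x) := by
          rw [Matrix.mul_assoc, ← mulVec_mulVec, dotProduct_mulVec]
      _ = (Tᵀ *ᵥ x) ⬝ᵥ (M *ᵥ (Tᵀ *ᵥ x)) := by
          rw [← mulVec_transpose, ← mulVec_mulVec]
      _ < 0 := hlt2

lemma negdef_conj_iff {k : Type*} [Fintype k] [DecidableEq k]
    (M T T' : Matrix k k ℝ) (h1 : T * T' = 1) (h2 : T' * T = 1) :
    (T * M * Tᵀ).NegDefR ↔ M.NegDefR := by
  constructor
  · intro h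
    have := negdef_conj _ T' T h2 h
    have e : T' * (T * M * Tᵀ) * T'ᵀ = M := by
      rw [← Matrix.mul_assoc, ← Matrix.mul_assoc, h2, Matrix.one_mul,
        Matrix.mul_assoc, ← transpose_mul, h2, transpose_one, Matrix.mul_one]
    rwa [e] at this
  · exact negdef_conj M T T' h1

theorem block_negdef_congruence_transform
    (n m : ℕ) (hn : 0 < n) (hm : 0 < m)
    (A : Matrix (Fin n) (Fin n) ℝ) (B : Matrix (Fin n) (Fin m) ℝ)
    (C : Matrix (Fin m) (Fin n) ℝ) (D G : Matrix (Fin m) (Fin m) ℝ)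
    (F : Matrix (Fin m) (Fin n) ℝ)
    (hG : IsUnit G)
    (Ahat : Matrix (Fin n) (Fin n) ℝ) (hAhat : Ahat = A - B * F)
    (Chat : Matrix (Fin m) (Fin n) ℝ) (hChat : Chat = G * (C - D * F))
    (P : Matrix (Fin n) (Fin n) ℝ) (hP : P.PosDef)
    (Q : Matrix (Fin n) (Fin n) ℝ) (hQ : Q = P⁻¹)
    (R : Matrix (Fin m) (Fin n) ℝ) (hR : R = F * P⁻¹)
    (S : Matrix (Fin m) (Fin m) ℝ) (hS : S = G⁻¹) :
    (Matrix.fromBlocks (P * Ahat + Ahatᵀ * P) (P * B - Chatᵀ)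
        (Bᵀ * P - Chat) (-(G * D + (G * D)ᵀ))).NegDefR ↔
      (Matrix.fromBlocks (A * Q + Q * Aᵀ - B * R - Rᵀ * Bᵀ) (B * Sᵀ - Q * Cᵀ + Rᵀ * Dᵀ)
          (S * Bᵀ - C * Q + D * R) (-(D * Sᵀ + S * Dᵀ))).NegDefR := by
  have hPdet : IsUnit P.det := isUnit_iff_ne_zero.mpr (ne_of_gt hP.det_pos)
  have hGdet : IsUnit G.det := (Matrix.isUnit_iff_isUnit_det G).mp hG
  have hQP : Q * P = 1 := by rw [hQ]; exact Matrix.nonsing_inv_mul P hPdet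
  have hPQ : P * Q = 1 := by rw [hQ]; exact Matrix.mul_nonsing_inv P hPdet
  have hSG : S * G = 1 := by rw [hS]; exact Matrix.nonsing_inv_mul G hGdet
  have hGS : G * S = 1 := by rw [hS]; exact Matrix.mul_nonsing_inv G hGdet
  have hPsym : Pᵀ = P := by
    have h := hP.1
    have : Pᴴ = Pᵀ := by ext i j; simp [Matrix.conjTranspose_apply]
    rw [← this]; exact h
  have hQsym : Qᵀ = Q := by
    rw [hQ, Matrix.transpose_nonsing_inv, hPsym]
  have hRQ : R = F * Q := by rw [hR, hQ]
  have hGtSt : Gᵀ * Sᵀ = (1 : Matrix (Fin m) (Fin m) ℝ) := by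
    rw [← Matrix.transpose_mul, hSG, Matrix.transpose_one]
  have hQPX : ∀ {l : Type} [Fintype l] (X : Matrix (Fin n) l ℝ), Q * (P * X) = X := by
    intro l _ X; rw [← Matrix.mul_assoc, hQP, Matrix.one_mul]
  have hSGX : ∀ {l : Type} [Fintype l] (X : Matrix (Fin m) l ℝ), S * (G * X) = X := by
    intro l _ X; rw [← Matrix.mul_assoc, hSG, Matrix.one_mul]
  set T : Matrix (Sum (Fin n) (Fin m)) (Sum (Fin n) (Fin m)) ℝ := Matrix.fromBlocks Q 0 0 S with hT
  set T' : Matrix (Sum (Fin n) (Fin m)) (Sum (Fin n) (Fin m)) ℝ := Matrix.fromBlocks P 0 0 G with hT'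
  have hTT' : T * T' = 1 := by
    rw [hT, hT']
    simp only [Matrix.fromBlocks_multiply, Matrix.mul_zero, Matrix.zero_mul, add_zero, zero_add,
      hQP, hSG, Matrix.fromBlocks_one]
  have hT'T : T' * T = 1 := by
    rw [hT, hT']
    simp only [Matrix.fromBlocks_multiply, Matrix.mul_zero, Matrix.zero_mul, add_zero, zero_add,
      hPQ, hGS, Matrix.fromBlocks_one]
  have b11 : Q * (P * Ahat + Ahatᵀ * P) * Q = A * Q + Q * Aᵀ - B * R - Rᵀ * Bᵀ := by
    simp only [hAhat, hRQ, Matrix.transpose_sub, Matrix.transpose_mul, hQsym,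
      Matrix.mul_add, Matrix.add_mul, Matrix.mul_sub, Matrix.sub_mul, Matrix.mul_assoc,
      hQPX, hSGX, hPQ, hGtSt, Matrix.one_mul, Matrix.mul_one]
    abel
  have b12 : Q * (P * B - Chatᵀ) * Sᵀ = B * Sᵀ - Q * Cᵀ + Rᵀ * Dᵀ := by
    simp only [hChat, hRQ, Matrix.transpose_sub, Matrix.transpose_mul, hQsym,
      Matrix.mul_add, Matrix.add_mul, Matrix.mul_sub, Matrix.sub_mul, Matrix.mul_assoc,
      hQPX, hSGX, hPQ, hGtSt, Matrix.one_mul, Matrix.mul_one]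
    abel
  have b21 : S * (Bᵀ * P - Chat) * Q = S * Bᵀ - C * Q + D * R := by
    simp only [hChat, hRQ, Matrix.transpose_sub, Matrix.transpose_mul, hQsym,
      Matrix.mul_add, Matrix.add_mul, Matrix.mul_sub, Matrix.sub_mul, Matrix.mul_assoc,
      hQPX, hSGX, hPQ, hGtSt, Matrix.one_mul, Matrix.mul_one]
    abel
  have b22 : S * (-(G * D + (G * D)ᵀ)) * Sᵀ = -(D * Sᵀ + S * Dᵀ) := by
    simp only [Matrix.transpose_mul, Matrix.mul_neg, Matrix.neg_mul,
      Matrix.mul_add, Matrix.add_mul, Matrix.mul_assoc,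
      hSGX, hGtSt, Matrix.one_mul, Matrix.mul_one]
  have key : Matrix.fromBlocks (A * Q + Q * Aᵀ - B * R - Rᵀ * Bᵀ) (B * Sᵀ - Q * Cᵀ + Rᵀ * Dᵀ)
      (S * Bᵀ - C * Q + D * R) (-(D * Sᵀ + S * Dᵀ))
      = T * (Matrix.fromBlocks (P * Ahat + Ahatᵀ * P) (P * B - Chatᵀ)
        (Bᵀ * P - Chat) (-(G * D + (G * D)ᵀ))) * Tᵀ := by
    rw [hT, Matrix.fromBlocks_transpose, hQsym, Matrix.fromBlocks_multiply,
      Matrix.fromBlocks_multiply]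
    simp only [Matrix.zero_mul, Matrix.mul_zero, add_zero, zero_add, Matrix.transpose_zero]
    rw [b11, b12, b21, b22]
  rw [key]
  exact (negdef_conj_iff _ T T' hTT' hT'T).symm
end

section
/- Let M ∈ ℝ^{n×n} be a real square matrix, τ ∈ ℝ, and let Q ∈ ℝ^{n×n} be symmetric positive definite such that M Q + Q Mᵀ + 2τ Q is positive definite. Then every eigenvalue μ ∈ ℂ of M (i.e., every eigenvalue of the complexification of M, equivalently every root of the characteristic polynomial of M over ℂ) satisfies Re μ > −τ. -/
/-!
If `w` is a left eigenvector of `A` for `μ`, then evaluating the Hermitian form of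
`A Q + Q Aᴴ + 2τ Q` at `star w` gives `2 (Re μ + τ)` times the value of the form of `Q` there;
both values have positive real part, hence `Re μ + τ > 0`. A real positive definite matrix stays
positive definite over `ℂ`, which reduces the real statement to the complex one.
-/

open Matrix
open scoped ComplexOrder

namespace Matrix

variable {n : Type*} [Fintype n] {𝕜 : Type*} [RCLike 𝕜]

theorem PosDef.map_algebraMap {S : Matrix n n ℝ} (hS : S.PosDef) :
    (S.map (algebraMap ℝ 𝕜)).PosDef := by
  have hH : (S.map (algebraMap ℝ 𝕜)).IsHermitian := by
    rw [IsHermitian, ← conjTranspose_map _ (fun r => by simp), hS.isHermitian.eq]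
  refine PosDef.of_dotProduct_mulVec_pos hH fun x hx => RCLike.pos_iff.mpr
    ⟨?_, hH.im_star_dotProduct_mulVec_self x⟩
  set a : n → ℝ := fun i => RCLike.re (x i)
  set b : n → ℝ := fun i => RCLike.im (x i)
  have hre : RCLike.re (star x ⬝ᵥ S.map (algebraMap ℝ 𝕜) *ᵥ x)
      = a ⬝ᵥ S *ᵥ a + b ⬝ᵥ S *ᵥ b := by
    simp only [dotProduct, mulVec, Pi.star_apply, map_apply, Finset.mul_sum, map_sum,
      ← Finset.sum_add_distrib]
    refine Finset.sum_congr rfl fun i _ => Finset.sum_congr rfl fun j _ => ?_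
    simp only [RCLike.star_def, RCLike.mul_re, RCLike.mul_im, RCLike.conj_re,
      RCLike.conj_im, RCLike.algebraMap_eq_ofReal, RCLike.ofReal_re, RCLike.ofReal_im, a, b]
    ring
  have hab : a ≠ 0 ∨ b ≠ 0 := by
    by_contra! h
    exact hx (funext fun i => RCLike.ext (by simpa using congrFun h.1 i)
      (by simpa using congrFun h.2 i))
  have hpos {v : n → ℝ} (hv : v ≠ 0) : 0 < v ⬝ᵥ S *ᵥ v := by
    simpa using hS.dotProduct_mulVec_pos hv
  have hnonneg (v : n → ℝ) : 0 ≤ v ⬝ᵥ S *ᵥ v := by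
    simpa using hS.posSemidef.dotProduct_mulVec_nonneg v
  rw [hre]
  rcases hab with ha | hb
  · exact add_pos_of_pos_of_nonneg (hpos ha) (hnonneg b)
  · exact add_pos_of_nonneg_of_pos (hnonneg a) (hpos hb)

variable [DecidableEq n]

theorem exists_vecMul_eq_smul_of_mem_spectrum {K : Type*} [Field K] {A : Matrix n n K} {μ : K}
    (hμ : μ ∈ spectrum K A) : ∃ w ≠ 0, w ᵥ* A = μ • w := by
  rw [spectrum.mem_iff, isUnit_iff_isUnit_det, isUnit_iff_ne_zero, not_not,
    ← exists_vecMul_eq_zero_iff] at hμ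
  obtain ⟨w, hw, hwA⟩ := hμ
  refine ⟨w, hw, ?_⟩
  rw [vecMul_sub, Algebra.algebraMap_eq_smul_one, vecMul_smul, vecMul_one, sub_eq_zero] at hwA
  exact hwA.symm

theorem neg_lt_re_of_mem_spectrum_of_lyapunov {A Q : Matrix n n 𝕜} {τ : ℝ} (hQ : Q.PosDef)
    (hL : (A * Q + Q * Aᴴ + (2 * τ) • Q).PosDef) {μ : 𝕜} (hμ : μ ∈ spectrum 𝕜 A) :
    -τ < RCLike.re μ := by
  obtain ⟨w, hw, hwA⟩ := exists_vecMul_eq_smul_of_mem_spectrum hμ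
  have hAw : Aᴴ *ᵥ star w = star μ • star w := by rw [← star_vecMul, hwA, star_smul]
  set q := w ⬝ᵥ Q *ᵥ star w
  have hAQ : w ⬝ᵥ (A * Q) *ᵥ star w = μ * q := by
    rw [← mulVec_mulVec, dotProduct_mulVec, hwA, smul_dotProduct, smul_eq_mul]
  have hQA : w ⬝ᵥ (Q * Aᴴ) *ᵥ star w = star μ * q := by
    rw [← mulVec_mulVec, hAw, mulVec_smul, dotProduct_smul, smul_eq_mul]
  have hτQ : w ⬝ᵥ ((2 * τ) • Q) *ᵥ star w = ((2 * τ : ℝ) : 𝕜) * q := by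
    rw [smul_mulVec, dotProduct_smul, RCLike.real_smul_eq_coe_mul]
  have hL_eq : w ⬝ᵥ (A * Q + Q * Aᴴ + (2 * τ) • Q) *ᵥ star w
      = ((2 * (RCLike.re μ + τ) : ℝ) : 𝕜) * q := by
    rw [add_mulVec, add_mulVec, dotProduct_add, dotProduct_add, hAQ, hQA, hτQ, ← add_mul,
      ← add_mul, RCLike.star_def, RCLike.add_conj]
    push_cast
    ring
  have hw' : star w ≠ 0 := by simpa using hw
  have hq := hQ.re_dotProduct_pos hw'
  have hLq := hL.re_dotProduct_pos hw'
  rw [star_star] at hq hLq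
  rw [hL_eq, RCLike.re_ofReal_mul] at hLq
  have := pos_of_mul_pos_left hLq hq.le
  linarith

end Matrix

theorem lyapunov_pole_right_of_line
    (n : ℕ) (M : Matrix (Fin n) (Fin n) ℝ) (τ : ℝ)
    (Q : Matrix (Fin n) (Fin n) ℝ) (hQ : Q.PosDef)
    (hLMI : (M * Q + Q * Mᵀ + (2 * τ) • Q).PosDef) :
    ∀ μ : ℂ, μ ∈ spectrum ℂ (M.map (Complex.ofReal)) → -τ < μ.re := by
  intro μ hμ
  rw [← Complex.coe_algebraMap] at hμ
  have hmap : (M * Q + Q * Mᵀ + (2 * τ) • Q).map (algebraMap ℝ ℂ)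
      = M.map (algebraMap ℝ ℂ) * Q.map (algebraMap ℝ ℂ)
        + Q.map (algebraMap ℝ ℂ) * (M.map (algebraMap ℝ ℂ))ᴴ
        + (2 * τ) • Q.map (algebraMap ℝ ℂ) := by
    rw [← conjTranspose_map _ (fun r => by simp), conjTranspose_eq_transpose_of_trivial,
      Matrix.map_add _ (map_add _), Matrix.map_add _ (map_add _), Matrix.map_mul, Matrix.map_mul,
      Matrix.map_smul _ _ (fun a => by rw [smul_eq_mul, map_mul, Algebra.smul_def])]
  have hLMI_ℂ := hLMI.map_algebraMap (𝕜 := ℂ)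
  rw [hmap] at hLMI_ℂ
  exact neg_lt_re_of_mem_spectrum_of_lyapunov hQ.map_algebraMap hLMI_ℂ hμ
end

section
/- Let M ∈ ℝ^{n×n} be a real square matrix, τ > 0, and let Q ∈ ℝ^{n×n} be symmetric positive definite such that the symmetric block matrix [[τ(M Q + Q Mᵀ), M Q − Q Mᵀ], [Q Mᵀ − M Q, τ(M Q + Q Mᵀ)]] ∈ ℝ^{2n×2n} is negative definite. Then every eigenvalue μ ∈ ℂ of M (i.e., every eigenvalue of the complexification of M) satisfies |Im μ| < −τ · Re μ; in particular Re μ < 0 and μ lies in the open conic sector around the negative real axis with half-angle arctan(1/τ). -/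
/-!
Since `xᵀ (M Q) y = (Mᵀ x)ᵀ Q y`, work with an eigenvector `w = a + i b` of `Mᵀ` for `μ = α + i β`:
`Mᵀ` acts on `a, b` as the rotation-scaling `Mᵀ a = α a - β b`, `Mᵀ b = β a + α b`. Evaluating the
quadratic form of the block matrix at `(a, b)` gives `2 (τ α - β) p` with `p = aᵀ Q a + bᵀ Q b > 0`;
doing the same for the conjugate eigenvector `(a, -b)` gives `2 (τ α + β) p`. Both are negative,
so `|β| < -τ α`.
-/

open Matrix

section
variable {ι : Type*} [Fintype ι]

def conicSectorMatrix (τ : ℝ) (P : Matrix ι ι ℝ) : Matrix (ι ⊕ ι) (ι ⊕ ι) ℝ :=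
  fromBlocks (τ • (P + Pᵀ)) (P - Pᵀ) (Pᵀ - P) (τ • (P + Pᵀ))

theorem sumElim_dotProduct_conicSectorMatrix_mulVec (τ : ℝ) (P : Matrix ι ι ℝ) (x y : ι → ℝ) :
    Sum.elim x y ⬝ᵥ conicSectorMatrix τ P *ᵥ Sum.elim x y =
      2 * (τ * (x ⬝ᵥ P *ᵥ x + y ⬝ᵥ P *ᵥ y) + (x ⬝ᵥ P *ᵥ y - y ⬝ᵥ P *ᵥ x)) := by
  simp only [conicSectorMatrix, fromBlocks_mulVec, sumElim_dotProduct_sumElim, add_mulVec,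
    sub_mulVec, smul_mulVec, dotProduct_add, dotProduct_sub, dotProduct_smul, smul_eq_mul,
    dotProduct_transpose_mulVec, Sum.elim_comp_inl, Sum.elim_comp_inr]
  ring

theorem conicSectorForm_eq_of_mulVec_rotation {M Q : Matrix ι ι ℝ} (hQ : Qᵀ = Q) {a b : ι → ℝ}
    {α β : ℝ} (ha : Mᵀ *ᵥ a = α • a - β • b) (hb : Mᵀ *ᵥ b = β • a + α • b) (τ : ℝ) :
    τ * (a ⬝ᵥ (M * Q) *ᵥ a + b ⬝ᵥ (M * Q) *ᵥ b) + (a ⬝ᵥ (M * Q) *ᵥ b - b ⬝ᵥ (M * Q) *ᵥ a) =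
      (τ * α - β) * (a ⬝ᵥ Q *ᵥ a + b ⬝ᵥ Q *ᵥ b) := by
  have hQab : b ⬝ᵥ Q *ᵥ a = a ⬝ᵥ Q *ᵥ b := by
    rw [← dotProduct_transpose_mulVec, hQ]
  simp only [← mulVec_mulVec, dotProduct_mulVec _ M, ← mulVec_transpose, ha, hb, add_dotProduct,
    sub_dotProduct, smul_dotProduct, smul_eq_mul, hQab]
  ring

theorem Matrix.PosDef.add_dotProduct_mulVec_pos {Q : Matrix ι ι ℝ} (hQ : Q.PosDef) {a b : ι → ℝ}
    (hab : a ≠ 0 ∨ b ≠ 0) : 0 < a ⬝ᵥ Q *ᵥ a + b ⬝ᵥ Q *ᵥ b := by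
  have ha := hQ.posSemidef.dotProduct_mulVec_nonneg a
  have hb := hQ.posSemidef.dotProduct_mulVec_nonneg b
  simp only [star_trivial] at ha hb
  rcases hab with hab | hab
  · simpa using add_pos_of_pos_of_nonneg (hQ.dotProduct_mulVec_pos hab) hb
  · simpa using add_pos_of_nonneg_of_pos ha (hQ.dotProduct_mulVec_pos hab)

theorem sub_neg_of_conicSectorMatrix_negDefR {M Q : Matrix ι ι ℝ} {τ : ℝ}
    (hLMI : (conicSectorMatrix τ (M * Q)).NegDefR) (hQ : Q.PosDef) {a b : ι → ℝ} {α β : ℝ}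
    (ha : Mᵀ *ᵥ a = α • a - β • b) (hb : Mᵀ *ᵥ b = β • a + α • b) (hab : a ≠ 0 ∨ b ≠ 0) :
    τ * α - β < 0 := by
  have hab' : Sum.elim a b ≠ 0 := by
    intro h
    rcases hab with hab | hab
    · exact hab (funext fun i => congrFun h (.inl i))
    · exact hab (funext fun i => congrFun h (.inr i))
  have hform := hLMI.2 _ hab'
  rw [sumElim_dotProduct_conicSectorMatrix_mulVec,
    conicSectorForm_eq_of_mulVec_rotation (isHermitian_iff_isSymm.mp hQ.isHermitian).eq ha hb]
    at hform
  exact neg_of_mul_neg_left (by linarith) (hQ.add_dotProduct_mulVec_pos hab).le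

theorem exists_transpose_mulVec_eq_smul_of_mem_spectrum {K : Type*} [Field K] [DecidableEq ι]
    {A : Matrix ι ι K} {μ : K} (hμ : μ ∈ spectrum K A) : ∃ w ≠ 0, Aᵀ *ᵥ w = μ • w := by
  rw [mem_spectrum_iff_isRoot_charpoly, ← charpoly_transpose, ← mem_spectrum_iff_isRoot_charpoly,
    ← spectrum_toLin', ← Module.End.hasEigenvalue_iff_mem_spectrum] at hμ
  obtain ⟨w, hw⟩ := hμ.exists_hasEigenvector
  exact ⟨w, hw.2, hw.apply_eq_smul⟩

theorem exists_mulVec_rotation_of_map_ofReal_mulVec_eq_smul {A : Matrix ι ι ℝ} {w : ι → ℂ}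
    {μ : ℂ} (hw0 : w ≠ 0) (hw : A.map Complex.ofReal *ᵥ w = μ • w) :
    ∃ a b : ι → ℝ, (a ≠ 0 ∨ b ≠ 0) ∧
      A *ᵥ a = μ.re • a - μ.im • b ∧ A *ᵥ b = μ.im • a + μ.re • b := by
  refine ⟨fun i => (w i).re, fun i => (w i).im, ?_, ?_, ?_⟩
  · by_contra! h
    exact hw0 (funext fun i => Complex.ext (congrFun h.1 i) (congrFun h.2 i))
  · ext i
    simpa [mulVec, dotProduct, Complex.re_sum] using congrArg Complex.re (congrFun hw i)
  · ext i
    simpa [mulVec, dotProduct, Complex.im_sum, add_comm] using congrArg Complex.im (congrFun hw i)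

end

theorem conic_sector_pole_constraint
    (n : ℕ) (M : Matrix (Fin n) (Fin n) ℝ) (τ : ℝ) (hτ : 0 < τ)
    (Q : Matrix (Fin n) (Fin n) ℝ) (hQ : Q.PosDef)
    (hLMI : (Matrix.fromBlocks (τ • (M * Q + Q * Mᵀ)) (M * Q - Q * Mᵀ)
        (Q * Mᵀ - M * Q) (τ • (M * Q + Q * Mᵀ))).NegDefR) :
    ∀ μ : ℂ, μ ∈ spectrum ℂ (M.map (Complex.ofReal)) →
      |μ.im| < -τ * μ.re ∧ μ.re < 0 := by
  intro μ hμ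
  have hLMI' : (conicSectorMatrix τ (M * Q)).NegDefR := by
    rwa [conicSectorMatrix, transpose_mul, (isHermitian_iff_isSymm.mp hQ.isHermitian).eq]
  obtain ⟨w, hw0, hw⟩ := exists_transpose_mulVec_eq_smul_of_mem_spectrum hμ
  rw [← transpose_map] at hw
  obtain ⟨a, b, hab, ha, hb⟩ := exists_mulVec_rotation_of_map_ofReal_mulVec_eq_smul hw0 hw
  have h₁ : τ * μ.re - μ.im < 0 := sub_neg_of_conicSectorMatrix_negDefR hLMI' hQ ha hb hab
  have h₂ : τ * μ.re - -μ.im < 0 :=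
    sub_neg_of_conicSectorMatrix_negDefR hLMI' hQ (b := -b) (by rw [ha]; module)
      (by rw [mulVec_neg, hb]; module) (hab.imp id neg_ne_zero.mpr)
  have hre : μ.re < 0 := neg_of_mul_neg_right (by linarith) hτ.le
  exact ⟨abs_lt.mpr ⟨by linarith, by linarith⟩, hre⟩
end

section
/- Fix an invertible matrix J ∈ ℝ^{3×3}, a constant c_q ∈ ℝ, rotation directions d : {1,2,3,4} → ℝ. For μ ∈ ℝ, r : {1,2,3,4} → ℝ³, and b : {1,2,3,4} → ℝ, define B(μ, r, b) ∈ ℝ^{12×4} columnwise: column i has entries 4–6 equal to b(i)·μ·e₃ = (0, 0, b(i)μ)ᵀ, entries 10–12 equal to b(i) · J⁻¹ ((r(i))_y, −(r(i))_x, d(i) c_q)ᵀ, and all other entries zero. Let α : {1,2} → ℝ with Σ_h α_h = 1, β : {1,2,3,4} → ℝ with Σ_l β_l = 1, and γ_i : {1,2} → ℝ with Σ_k γ_{i,k} = 1 for each i ∈ {1,2,3,4}; let μ_h ∈ ℝ, r_{i,l} ∈ ℝ³ and b_{i,k} ∈ ℝ be given vertex data. Then B(Σ_h α_h μ_h, (Σ_l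 β_l r_{i,l})_i, (Σ_k γ_{i,k} b_{i,k})_i) = Σ_{h=1}^{2} Σ_{l=1}^{4} Σ_{k₁=1}^{2} Σ_{k₂=1}^{2} Σ_{k₃=1}^{2} Σ_{k₄=1}^{2} α_h β_l γ_{1,k₁} γ_{2,k₂} γ_{3,k₃} γ_{4,k₄} · B(μ_h, (r_{i,l})_i, (b_{i,k_i})_i). -/
open Matrix

/-- The input matrix `B(μ, r, b)` of the error system: column `i` has entries 4–6 equal to
`b i • μ • e₃`, entries 10–12 equal to `b i • J⁻¹ ((r i)_y, −(r i)_x, d i * c_q)ᵀ`,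
and all other entries zero. -/
noncomputable def inputMatrix (J : Matrix (Fin 3) (Fin 3) ℝ) (cq : ℝ) (d : Fin 4 → ℝ)
    (μ : ℝ) (r : Fin 4 → (Fin 3 → ℝ)) (b : Fin 4 → ℝ) : Matrix (Fin 12) (Fin 4) ℝ :=
  fun x i =>
    if x = (5 : Fin 12) then b i * μ
    else if x = (9 : Fin 12) then b i * (J⁻¹ *ᵥ ![r i 1, -(r i 0), d i * cq]) 0
    else if x = (10 : Fin 12) then b i * (J⁻¹ *ᵥ ![r i 1, -(r i 0), d i * cq]) 1
    else if x = (11 : Fin 12) then b i * (J⁻¹ *ᵥ ![r i 1, -(r i 0), d i * cq]) 2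
    else 0

section Aux

variable {J : Matrix (Fin 3) (Fin 3) ℝ} {cq : ℝ} {d : Fin 4 → ℝ} {μ : ℝ}
  {r : Fin 4 → (Fin 3 → ℝ)} {b : Fin 4 → ℝ} {i : Fin 4}

lemma im5' : inputMatrix J cq d μ r b 5 i = b i * μ := rfl

lemma im9' : inputMatrix J cq d μ r b 9 i
    = b i * (J⁻¹ 0 0 * r i 1 - J⁻¹ 0 1 * r i 0 + J⁻¹ 0 2 * (d i * cq)) := by
  simp only [inputMatrix, Matrix.mulVec, dotProduct, Fin.sum_univ_three,
    Matrix.cons_val_zero, Matrix.cons_val_one, Matrix.head_cons, Matrix.cons_val_two,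
    Matrix.tail_cons, Fin.reduceEq, reduceIte]
  ring

lemma im10' : inputMatrix J cq d μ r b 10 i
    = b i * (J⁻¹ 1 0 * r i 1 - J⁻¹ 1 1 * r i 0 + J⁻¹ 1 2 * (d i * cq)) := by
  simp only [inputMatrix, Matrix.mulVec, dotProduct, Fin.sum_univ_three,
    Matrix.cons_val_zero, Matrix.cons_val_one, Matrix.head_cons, Matrix.cons_val_two,
    Matrix.tail_cons, Fin.reduceEq, reduceIte]
  ring

lemma im11' : inputMatrix J cq d μ r b 11 i
    = b i * (J⁻¹ 2 0 * r i 1 - J⁻¹ 2 1 * r i 0 + J⁻¹ 2 2 * (d i * cq)) := by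
  simp only [inputMatrix, Matrix.mulVec, dotProduct, Fin.sum_univ_three,
    Matrix.cons_val_zero, Matrix.cons_val_one, Matrix.head_cons, Matrix.cons_val_two,
    Matrix.tail_cons, Fin.reduceEq, reduceIte]
  ring

lemma imz' {x : Fin 12} (hx5 : x ≠ 5) (hx9 : x ≠ 9) (hx10 : x ≠ 10) (hx11 : x ≠ 11) :
    inputMatrix J cq d μ r b x i = 0 := by
  simp [inputMatrix, hx5, hx9, hx10, hx11]

end Aux

set_option maxHeartbeats 1000000 in
lemma key_multiconvex (γ : Fin 4 → Fin 2 → ℝ) (bv : Fin 4 → Fin 2 → ℝ)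
    (hγ : ∀ j, γ j 0 + γ j 1 = 1) (i : Fin 4)
    (α : Fin 2 → ℝ) (β : Fin 4 → ℝ) (E : Fin 2 → Fin 4 → ℝ) :
    ∑ h : Fin 2, ∑ l : Fin 4, ∑ k₁ : Fin 2, ∑ k₂ : Fin 2, ∑ k₃ : Fin 2, ∑ k₄ : Fin 2,
      (α h * β l * γ 0 k₁ * γ 1 k₂ * γ 2 k₃ * γ 3 k₄) *
        (bv i (![k₁, k₂, k₃, k₄] i) * E h l)
    = (∑ k, γ i k * bv i k) * (∑ h : Fin 2, ∑ l : Fin 4, α h * β l * E h l) := by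
  have h0 : γ 0 1 = 1 - γ 0 0 := by have := hγ 0; linarith
  have h1 : γ 1 1 = 1 - γ 1 0 := by have := hγ 1; linarith
  have h2 : γ 2 1 = 1 - γ 2 0 := by have := hγ 2; linarith
  have h3 : γ 3 1 = 1 - γ 3 0 := by have := hγ 3; linarith
  have hi : i = 0 ∨ i = 1 ∨ i = 2 ∨ i = 3 := by omega
  rcases hi with rfl | rfl | rfl | rfl <;>
  · simp only [Fin.sum_univ_two, Fin.sum_univ_four, Matrix.cons_val_zero,
      Matrix.cons_val_one, Matrix.head_cons, Matrix.cons_val_two, Matrix.tail_cons,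
      Matrix.cons_val_three]
    rw [h0, h1, h2, h3]
    ring

theorem inputMatrix_multiconvex_combination
    (J : Matrix (Fin 3) (Fin 3) ℝ) (hJ : IsUnit J) (cq : ℝ) (d : Fin 4 → ℝ)
    (α : Fin 2 → ℝ) (hα : ∑ h, α h = 1)
    (β : Fin 4 → ℝ) (hβ : ∑ l, β l = 1)
    (γ : Fin 4 → Fin 2 → ℝ) (hγ : ∀ i, ∑ k, γ i k = 1)
    (μv : Fin 2 → ℝ) (rv : Fin 4 → Fin 4 → (Fin 3 → ℝ)) (bv : Fin 4 → Fin 2 → ℝ) :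
    inputMatrix J cq d (∑ h, α h * μv h)
        (fun i => ∑ l, β l • rv i l)
        (fun i => ∑ k, γ i k * bv i k) =
      ∑ h : Fin 2, ∑ l : Fin 4, ∑ k₁ : Fin 2, ∑ k₂ : Fin 2, ∑ k₃ : Fin 2, ∑ k₄ : Fin 2,
        (α h * β l * γ 0 k₁ * γ 1 k₂ * γ 2 k₃ * γ 3 k₄) •
          inputMatrix J cq d (μv h) (fun i => rv i l)
            (fun i => bv i (![k₁, k₂, k₃, k₄] i)) := by
  have hα' : α 1 = 1 - α 0 := by
    have := hα; simp [Fin.sum_univ_two] at this; linarith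
  have hβ' : β 3 = 1 - β 0 - β 1 - β 2 := by
    have := hβ; simp [Fin.sum_univ_four] at this; linarith
  have hγ' : ∀ j, γ j 0 + γ j 1 = 1 := by
    intro j; have := hγ j; simpa [Fin.sum_univ_two] using this
  ext x i
  by_cases h5 : x = (5 : Fin 12)
  · subst h5
    simp only [im5', Matrix.sum_apply, Matrix.smul_apply, smul_eq_mul]
    rw [key_multiconvex γ bv hγ' i α β (fun h _ => μv h)]
    congr 1
    simp only [Fin.sum_univ_two, Fin.sum_univ_four]
    rw [hβ']
    ring
  · by_cases h9 : x = (9 : Fin 12)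
    · subst h9
      simp only [im9', Matrix.sum_apply, Matrix.smul_apply, smul_eq_mul,
        Finset.sum_apply, Pi.smul_apply]
      rw [key_multiconvex γ bv hγ' i α β
        (fun _ l => J⁻¹ 0 0 * rv i l 1 - J⁻¹ 0 1 * rv i l 0 + J⁻¹ 0 2 * (d i * cq))]
      congr 1
      simp only [Fin.sum_univ_two, Fin.sum_univ_four]
      rw [hα', hβ']
      ring
    · by_cases h10 : x = (10 : Fin 12)
      · subst h10
        simp only [im10', Matrix.sum_apply, Matrix.smul_apply, smul_eq_mul,
          Finset.sum_apply, Pi.smul_apply]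
        rw [key_multiconvex γ bv hγ' i α β
          (fun _ l => J⁻¹ 1 0 * rv i l 1 - J⁻¹ 1 1 * rv i l 0 + J⁻¹ 1 2 * (d i * cq))]
        congr 1
        simp only [Fin.sum_univ_two, Fin.sum_univ_four]
        rw [hα', hβ']
        ring
      · by_cases h11 : x = (11 : Fin 12)
        · subst h11
          simp only [im11', Matrix.sum_apply, Matrix.smul_apply, smul_eq_mul,
            Finset.sum_apply, Pi.smul_apply]
          rw [key_multiconvex γ bv hγ' i α β
            (fun _ l => J⁻¹ 2 0 * rv i l 1 - J⁻¹ 2 1 * rv i l 0 + J⁻¹ 2 2 * (d i * cq))]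
          congr 1
          simp only [Fin.sum_univ_two, Fin.sum_univ_four]
          rw [hα', hβ']
          ring
        · simp only [Matrix.sum_apply, Matrix.smul_apply, smul_eq_mul,
            imz' h5 h9 h10 h11, mul_zero, Finset.sum_const_zero]
end
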